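/- arXiv:2511.10592 — 2 statements merged into one kernel-verified Lean document; each statement's English description precedes it below -/
import Mathlib

section
/- Let n ≥ 2k and let F ⊆ ([n] choose k) be a left-compressed intersecting family. Then every F ∈ F satisfies F ≤_LC Z_i for some i ∈ [k], where Z_i := [i, 2i−1] ∪ [n−k+i+1, n]. Equivalently, every F ∈ F satisfies |F ∩ [2i−1]| ≥ i for some i ∈ [k]. -/
open Finset

/-- `G ≤_LC F`: both are `k`-sets and the increasing enumeration of `G` is
coordinatewise at most that of `F`. -/
def lcLE (k : ℕ) (G F : Finset ℕ) : Prop :=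
  ∃ (hG : G.card = k) (hF : F.card = k),
    ∀ i : Fin k, G.orderEmbOfFin hG i ≤ F.orderEmbOfFin hF i

/-- `([n] choose k)`: the `k`-element subsets of `[n] = {1,…,n}`. -/
def ground (n k : ℕ) : Finset (Finset ℕ) := (Finset.Icc 1 n).powersetCard k

/-- A family is intersecting if any two members meet. -/
def Intersecting' (𝓕 : Set (Finset ℕ)) : Prop := ∀ F ∈ 𝓕, ∀ G ∈ 𝓕, (F ∩ G).Nonempty

/-- A family of `k`-subsets of `[n]` closed under left-compressions. -/
def LeftCompressed (n k : ℕ) (𝓕 : Finset (Finset ℕ)) : Prop :=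
  𝓕 ⊆ ground n k ∧ ∀ F ∈ 𝓕, ∀ G ∈ ground n k, lcLE k G F → G ∈ 𝓕

/-- Maximal left-compressed intersecting family. -/
def MLCIF (n k : ℕ) (𝓕 : Finset (Finset ℕ)) : Prop :=
  LeftCompressed n k 𝓕 ∧ Intersecting' ↑𝓕 ∧
  ∀ 𝓖 : Finset (Finset ℕ), LeftCompressed n k 𝓖 → Intersecting' ↑𝓖 → 𝓕 ⊆ 𝓖 → 𝓕 = 𝓖

/-- The `i`-th canonical family `⟨i⟩`. -/
def canonical (n k i : ℕ) : Finset (Finset ℕ) :=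
  (ground n k).filter (fun F => i ≤ (F ∩ Finset.Icc 1 (2*i-1)).card)

/-- `Z_i = [i, 2i-1] ∪ [n-k+i+1, n]`. -/
def Zset (n k i : ℕ) : Finset ℕ :=
  Finset.Icc i (2*i-1) ∪ Finset.Icc (n-k+i+1) n

/-- `B` is a boundary set (`≤_LC`-maximal element) of `𝓕`. -/
def BoundaryIn (k : ℕ) (𝓕 : Finset (Finset ℕ)) (B : Finset ℕ) : Prop :=
  B ∈ 𝓕 ∧ ∀ F ∈ 𝓕, lcLE k B F → B = F

/-!
Write `a₀ < ⋯ < a_{k-1}` for the elements of `F`. If `aⱼ > 2j + 1` for every `j`, then at least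
`aⱼ - (j + 1) ≥ j + 1` elements of `[n] \ F` lie below `aⱼ`, so the `k` smallest elements of
`[n] \ F` (there are `n - k ≥ k` of them) form a set `G ≤_LC F`. By compression `G ∈ 𝓕`, yet `G`
misses `F`. Hence `aⱼ ≤ 2j + 1` for some `j`; with `i = j + 1` the `i` smallest elements of `F` are
then squeezed below `i, …, 2i - 1`, and the others are at most `n - k + i + 1, …, n` simply
because `a_{k-1} ≤ n`.
-/

namespace Finset

variable {α : Type*} [LinearOrder α] {s : Finset α} {m : ℕ} (h : #s = m)

lemma filter_le_orderEmbOfFin (i : Fin m) :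
    {t ∈ s | t ≤ s.orderEmbOfFin h i} = (Iic i).map (s.orderEmbOfFin h).toEmbedding := by
  ext t
  simp only [mem_filter, mem_map, mem_Iic, RelEmbedding.coe_toEmbedding]
  constructor
  · rintro ⟨hts, hti⟩
    obtain ⟨j, rfl⟩ : t ∈ Set.range (s.orderEmbOfFin h) := by rwa [range_orderEmbOfFin]
    exact ⟨j, (s.orderEmbOfFin h).le_iff_le.1 hti, rfl⟩
  · rintro ⟨j, hji, rfl⟩
    exact ⟨orderEmbOfFin_mem s h j, (s.orderEmbOfFin h).le_iff_le.2 hji⟩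

lemma filter_lt_orderEmbOfFin (i : Fin m) :
    {t ∈ s | t < s.orderEmbOfFin h i} = (Iio i).map (s.orderEmbOfFin h).toEmbedding := by
  ext t
  simp only [mem_filter, mem_map, mem_Iio, RelEmbedding.coe_toEmbedding]
  constructor
  · rintro ⟨hts, hti⟩
    obtain ⟨j, rfl⟩ : t ∈ Set.range (s.orderEmbOfFin h) := by rwa [range_orderEmbOfFin]
    exact ⟨j, (s.orderEmbOfFin h).lt_iff_lt.1 hti, rfl⟩
  · rintro ⟨j, hji, rfl⟩
    exact ⟨orderEmbOfFin_mem s h j, (s.orderEmbOfFin h).lt_iff_lt.2 hji⟩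

lemma card_filter_le_orderEmbOfFin (i : Fin m) : #{t ∈ s | t ≤ s.orderEmbOfFin h i} = i + 1 := by
  rw [filter_le_orderEmbOfFin, card_map, Fin.card_Iic]

lemma card_filter_lt_orderEmbOfFin (i : Fin m) : #{t ∈ s | t < s.orderEmbOfFin h i} = i := by
  rw [filter_lt_orderEmbOfFin, card_map, Fin.card_Iio]

lemma orderEmbOfFin_le_iff_lt_card_filter {i : Fin m} {x : α} :
    s.orderEmbOfFin h i ≤ x ↔ (i : ℕ) < #{t ∈ s | t ≤ x} := by
  constructor
  · intro hx
    calc (i : ℕ) < #{t ∈ s | t ≤ s.orderEmbOfFin h i} := by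
          rw [card_filter_le_orderEmbOfFin]; omega
      _ ≤ #{t ∈ s | t ≤ x} := card_le_card (monotone_filter_right s fun _ _ ht ↦ ht.trans hx)
  · intro hx
    by_contra! hlt
    have hsub : {t ∈ s | t ≤ x} ⊆ {t ∈ s | t < s.orderEmbOfFin h i} :=
      monotone_filter_right s fun _ _ ht ↦ ht.trans_lt hlt
    have := card_le_card hsub
    rw [card_filter_lt_orderEmbOfFin] at this
    omega

end Finset

lemma StrictMono.apply_add_sub_le {k : ℕ} {f : Fin k → ℕ} (hf : StrictMono f) {p q : Fin k}
    (hpq : p ≤ q) : f p + (q - p : ℕ) ≤ f q := by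
  have hmaps : (Icc p q).image f ⊆ Icc (f p) (f q) := by
    intro x hx
    obtain ⟨j, hj, rfl⟩ := mem_image.1 hx
    rw [mem_Icc] at hj ⊢
    exact ⟨hf.monotone hj.1, hf.monotone hj.2⟩
  have hcard := card_le_card hmaps
  rw [card_image_of_injective _ hf.injective, Fin.card_Icc, Nat.card_Icc] at hcard
  have := hf.monotone hpq
  rw [Fin.le_def] at hpq
  omega

lemma card_Zset {n k i : ℕ} (h1i : 1 ≤ i) (hik : i ≤ k) (hin : k + i ≤ n + 1) :
    #(Zset n k i) = k := by
  have hdisj : Disjoint (Icc i (2 * i - 1)) (Icc (n - k + i + 1) n) := by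
    rw [disjoint_left]
    intro x hx1 hx2
    rw [mem_Icc] at hx1 hx2
    omega
  rw [Zset, card_union_of_disjoint hdisj, Nat.card_Icc, Nat.card_Icc]
  omega

lemma orderEmbOfFin_Zset {n k i : ℕ} (h1i : 1 ≤ i) (hin : k + i ≤ n + 1)
    (h : #(Zset n k i) = k) (j : Fin k) :
    (Zset n k i).orderEmbOfFin h j = if (j : ℕ) < i then i + j else n - k + 1 + j := by
  refine (congrFun (orderEmbOfFin_unique h
    (f := fun j : Fin k ↦ if (j : ℕ) < i then i + j else n - k + 1 + j) (fun j ↦ ?_)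
    fun p q hpq ↦ ?_) j).symm
  · have := j.isLt
    rw [Zset, mem_union, mem_Icc, mem_Icc]
    split_ifs <;> omega
  · have := q.isLt
    rw [Fin.lt_def] at hpq
    dsimp only
    split_ifs <;> omega

lemma lcLE_Zset_of_orderEmbOfFin_le {n k : ℕ} (hn : 2 * k ≤ n) {F : Finset ℕ}
    (hFn : F ⊆ Icc 1 n) (hF : #F = k) {j : Fin k} (hj : F.orderEmbOfFin hF j ≤ 2 * j + 1) :
    lcLE k F (Zset n k (j + 1)) := by
  have hjk := j.isLt
  have hZ := card_Zset (n := n) (Nat.le_add_left 1 j) hjk (by omega)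
  refine ⟨hF, hZ, fun l ↦ ?_⟩
  have hlk := l.isLt
  rw [orderEmbOfFin_Zset (Nat.le_add_left 1 j) (by omega)]
  have ha := (F.orderEmbOfFin hF).strictMono
  split_ifs with hl
  · have := ha.apply_add_sub_le (show l ≤ j by rw [Fin.le_def]; omega)
    omega
  · have hlast :=
      ha.apply_add_sub_le (show l ≤ ⟨k - 1, by omega⟩ by change (l : ℕ) ≤ k - 1; omega)
    have := (mem_Icc.1 (hFn (orderEmbOfFin_mem F hF ⟨k - 1, by omega⟩))).2
    dsimp only at hlast
    omega

lemma exists_disjoint_lcLE_of_two_mul_lt {n k : ℕ} (hn : 2 * k ≤ n) {F : Finset ℕ}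
    (hFn : F ⊆ Icc 1 n) (hF : #F = k) (hlarge : ∀ j : Fin k, 2 * j + 1 < F.orderEmbOfFin hF j) :
    ∃ G ∈ ground n k, Disjoint G F ∧ lcLE k G F := by
  set C := Icc 1 n \ F
  have hkC : k ≤ #C := by rw [card_sdiff_of_subset hFn, Nat.card_Icc]; omega
  set G := univ.map (C.orderEmbOfCardLe hkC).toEmbedding
  have hGC : G ⊆ C := by
    intro x hx
    obtain ⟨j, -, rfl⟩ := mem_map.1 hx
    exact orderEmbOfCardLe_mem C hkC j
  have hG : #G = k := by simp [G]
  have hb := orderEmbOfFin_unique' hG (f := C.orderEmbOfCardLe hkC)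
    fun j ↦ mem_map_of_mem _ (mem_univ j)
  refine ⟨G, mem_powersetCard.2 ⟨hGC.trans sdiff_subset, hG⟩,
    disjoint_of_subset_left hGC sdiff_disjoint, hG, hF, fun j ↦ ?_⟩
  rw [← hb]
  show C.orderEmbOfFin rfl (Fin.castLE hkC j) ≤ _
  rw [orderEmbOfFin_le_iff_lt_card_filter]
  set a := F.orderEmbOfFin hF j
  have hcover : Icc 1 a ⊆ {t ∈ C | t ≤ a} ∪ {t ∈ F | t ≤ a} := by
    have han := (mem_Icc.1 (hFn (orderEmbOfFin_mem F hF j))).2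
    intro t ht
    rw [mem_Icc] at ht
    rw [mem_union, mem_filter, mem_filter, mem_sdiff, mem_Icc]
    by_cases htF : t ∈ F
    · exact Or.inr ⟨htF, ht.2⟩
    · exact Or.inl ⟨⟨⟨ht.1, ht.2.trans han⟩, htF⟩, ht.2⟩
  have hcount := (card_le_card hcover).trans (card_union_le _ _)
  rw [Nat.card_Icc, card_filter_le_orderEmbOfFin] at hcount
  have := hlarge j
  simp only [Fin.val_castLE]
  omega

/-- Every member of a left-compressed intersecting family is `≤_LC Z_i` for some `i ∈ [k]`. -/
theorem stmt6 (n k : ℕ) (hn : 2*k ≤ n) (𝓕 : Finset (Finset ℕ))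
    (hlc : LeftCompressed n k 𝓕) (hint : Intersecting' ↑𝓕) :
    ∀ F ∈ 𝓕, ∃ i ∈ Finset.Icc 1 k, lcLE k F (Zset n k i) := by
  intro F hF
  obtain ⟨hFn, hFk⟩ := mem_powersetCard.1 (hlc.1 hF)
  obtain ⟨j, hj⟩ : ∃ j : Fin k, F.orderEmbOfFin hFk j ≤ 2 * j + 1 := by
    by_contra! hlarge
    obtain ⟨G, hG, hGF, hGF_le⟩ := exists_disjoint_lcLE_of_two_mul_lt hn hFn hFk hlarge
    obtain ⟨x, hx⟩ := hint F hF G (hlc.2 F hF G hG hGF_le)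
    exact disjoint_left.1 hGF (mem_inter.1 hx).2 (mem_inter.1 hx).1
  exact ⟨j + 1, mem_Icc.2 ⟨by omega, j.isLt⟩, lcLE_Zset_of_orderEmbOfFin_le hn hFn hFk hj⟩
end

section
/- For each integer k ≥ 2, the number of maximal left-compressed intersecting families in ([2k] choose k) is at least 2^{(1/2)·C(k−1, ⌊k/2⌋)}. -/
open Finset

/-!
Split `[2k]` into the pairs `{2s+1, 2s+2}`, `s < k`. A set `γ ⊆ [0, k)` of positions picks the
`k`-set `A(γ)` taking `2s+2` for `s ∈ γ` and `2s+1` otherwise, so `A(γ)` and `A(γᶜ)` are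
complementary. If `t ∉ γ ∪ δ`, then `A(γ)` and `A(δ)` each have `t + 1` elements in `[1, 2t+1]`,
and so has everything below them in the left-compression order; by pigeonhole the
left-compressed family generated by `A(γ)` and `A(δ)` is intersecting.

The seeds are the `⌊k/2⌋`-subsets of `[0, k)` containing `0`. Any two seeds meet and do not cover
`[0, k)`, and no seed contains another, so orienting each seed `α` as `α` or `αᶜ` in any of the
`2 ^ #seeds` ways leaves no two oriented sets covering `[0, k)`. Each orientation thus generates a
left-compressed intersecting family, contained in some MLCIF, and that MLCIF recovers the
orientation: it contains exactly one of `A(α)`, `A(αᶜ)`. Finally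
`C(k-1, ⌊k/2⌋) ≤ 2 C(k-1, ⌊k/2⌋-1) = 2 #seeds`.
-/

lemma lcLE_refl {k : ℕ} {F : Finset ℕ} (h : F.card = k) : lcLE k F F :=
  ⟨h, h, fun _ => le_rfl⟩

lemma lcLE_trans {k : ℕ} {A B C : Finset ℕ} (hAB : lcLE k A B) (hBC : lcLE k B C) :
    lcLE k A C := by
  obtain ⟨hA, _, h₁⟩ := hAB
  obtain ⟨_, hC, h₂⟩ := hBC
  exact ⟨hA, hC, fun i => (h₁ i).trans (h₂ i)⟩

lemma card_filter_le_eq_card_filter_orderEmbOfFin {k : ℕ} {F : Finset ℕ} (hF : F.card = k)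
    (j : ℕ) : #{x ∈ F | x ≤ j} = #{i : Fin k | F.orderEmbOfFin hF i ≤ j} := by
  rw [← card_image_of_injective _ (F.orderEmbOfFin hF).injective]
  congr 1
  ext x
  simp only [mem_filter, mem_image, mem_univ, true_and]
  constructor
  · rintro ⟨hx, hxj⟩
    obtain ⟨i, rfl⟩ : x ∈ Set.range (F.orderEmbOfFin hF) := by
      rwa [range_orderEmbOfFin]
    exact ⟨i, hxj, rfl⟩
  · rintro ⟨i, hij, rfl⟩
    exact ⟨orderEmbOfFin_mem F hF i, hij⟩

lemma lcLE.card_filter_le {k : ℕ} {G F : Finset ℕ} (h : lcLE k G F) (j : ℕ) :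
    #{x ∈ F | x ≤ j} ≤ #{x ∈ G | x ≤ j} := by
  obtain ⟨hG, hF, hle⟩ := h
  rw [card_filter_le_eq_card_filter_orderEmbOfFin hF,
    card_filter_le_eq_card_filter_orderEmbOfFin hG]
  exact card_le_card fun i hi => by
    simp only [mem_filter, mem_univ, true_and] at hi ⊢
    exact (hle i).trans hi

lemma inter_nonempty_of_card_filter_le {n t : ℕ} {F G : Finset ℕ}
    (hF : F ⊆ Icc 1 n) (hG : G ⊆ Icc 1 n)
    (hFt : t + 1 ≤ #{x ∈ F | x ≤ 2 * t + 1}) (hGt : t + 1 ≤ #{x ∈ G | x ≤ 2 * t + 1}) :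
    (F ∩ G).Nonempty := by
  have hsub : ∀ H ⊆ Icc 1 n, {x ∈ H | x ≤ 2 * t + 1} ⊆ Icc 1 (2 * t + 1) := fun H hH x hx => by
    rw [mem_filter] at hx
    have := mem_Icc.mp (hH hx.1)
    exact mem_Icc.mpr ⟨this.1, hx.2⟩
  obtain ⟨x, hx⟩ := inter_nonempty_of_card_lt_card_add_card (hsub F hF) (hsub G hG)
    (by rw [Nat.card_Icc]; omega)
  simp only [mem_inter, mem_filter] at hx
  exact ⟨x, mem_inter.mpr ⟨hx.1.1, hx.2.1⟩⟩

section Compression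

variable {n k : ℕ}

open Classical in
noncomputable def lcDownClosure (n k : ℕ) (𝒜 : Finset (Finset ℕ)) : Finset (Finset ℕ) :=
  {G ∈ ground n k | ∃ A ∈ 𝒜, lcLE k G A}

lemma mem_lcDownClosure {𝒜 : Finset (Finset ℕ)} {G : Finset ℕ} :
    G ∈ lcDownClosure n k 𝒜 ↔ G ∈ ground n k ∧ ∃ A ∈ 𝒜, lcLE k G A := by
  classical exact mem_filter

lemma subset_lcDownClosure {𝒜 : Finset (Finset ℕ)} (h𝒜 : 𝒜 ⊆ ground n k) :
    𝒜 ⊆ lcDownClosure n k 𝒜 := fun A hA =>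
  mem_lcDownClosure.mpr ⟨h𝒜 hA, A, hA, lcLE_refl (mem_powersetCard.mp (h𝒜 hA)).2⟩

lemma leftCompressed_lcDownClosure (𝒜 : Finset (Finset ℕ)) :
    LeftCompressed n k (lcDownClosure n k 𝒜) := by
  refine ⟨fun G hG => (mem_lcDownClosure.mp hG).1, fun F hF G hG hGF => ?_⟩
  obtain ⟨-, A, hA, hFA⟩ := mem_lcDownClosure.mp hF
  exact mem_lcDownClosure.mpr ⟨hG, A, hA, lcLE_trans hGF hFA⟩

lemma finite_setOf_MLCIF (n k : ℕ) : {𝓕 : Finset (Finset ℕ) | MLCIF n k 𝓕}.Finite :=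
  (ground n k).powerset.finite_toSet.subset fun _ h𝓕 => mem_powerset.mpr h𝓕.1.1

lemma exists_MLCIF_superset {𝒟 : Finset (Finset ℕ)} (hLC : LeftCompressed n k 𝒟)
    (hint : Intersecting' ↑𝒟) : ∃ 𝓕, MLCIF n k 𝓕 ∧ 𝒟 ⊆ 𝓕 := by
  classical
  set 𝒞 := (ground n k).powerset.filter
    (fun 𝓖 => LeftCompressed n k 𝓖 ∧ Intersecting' ↑𝓖 ∧ 𝒟 ⊆ 𝓖) with h𝒞
  have mem_𝒞 : ∀ 𝓖, LeftCompressed n k 𝓖 → Intersecting' ↑𝓖 → 𝒟 ⊆ 𝓖 → 𝓖 ∈ 𝒞 :=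
    fun 𝓖 h₁ h₂ h₃ => mem_filter.mpr ⟨mem_powerset.mpr h₁.1, h₁, h₂, h₃⟩
  obtain ⟨𝓕, h𝓕, hmax⟩ := exists_max_image 𝒞 card ⟨𝒟, mem_𝒞 𝒟 hLC hint subset_rfl⟩
  obtain ⟨-, hLC𝓕, hint𝓕, h𝒟𝓕⟩ := mem_filter.mp h𝓕
  refine ⟨𝓕, ⟨hLC𝓕, hint𝓕, fun 𝓖 hLC𝓖 hint𝓖 h𝓕𝓖 => ?_⟩, h𝒟𝓕⟩
  exact eq_of_subset_of_card_le h𝓕𝓖 (hmax 𝓖 (mem_𝒞 𝓖 hLC𝓖 hint𝓖 (h𝒟𝓕.trans h𝓕𝓖)))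

end Compression

section PairChoice

def pairPick (γ : Finset ℕ) (s : ℕ) : ℕ := if s ∈ γ then 2 * s + 2 else 2 * s + 1

def pairChoice (k : ℕ) (γ : Finset ℕ) : Finset ℕ := (range k).image (pairPick γ)

variable {k : ℕ} {γ δ : Finset ℕ}

lemma pairPick_eq_pairPick_iff {s s' : ℕ} :
    pairPick γ s = pairPick δ s' ↔ s = s' ∧ (s ∈ γ ↔ s' ∈ δ) := by
  unfold pairPick
  constructor
  · intro he
    split_ifs at he with hγ hδ hδ <;> refine ⟨by omega, ?_⟩ <;> first | tauto | omega
  · rintro ⟨rfl, hmem⟩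
    simp only [hmem]

lemma pairPick_injective (γ : Finset ℕ) : Function.Injective (pairPick γ) :=
  fun _ _ h => (pairPick_eq_pairPick_iff.mp h).1

lemma pairChoice_mem_ground (k : ℕ) (γ : Finset ℕ) : pairChoice k γ ∈ ground (2 * k) k := by
  refine mem_powersetCard.mpr ⟨fun x hx => ?_, ?_⟩
  · obtain ⟨s, hs, rfl⟩ := mem_image.mp hx
    rw [mem_range] at hs
    rw [mem_Icc, pairPick]
    split_ifs <;> omega
  · rw [pairChoice, card_image_of_injective _ (pairPick_injective γ), card_range]

lemma disjoint_pairChoice_sdiff (k : ℕ) (γ : Finset ℕ) :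
    Disjoint (pairChoice k γ) (pairChoice k (range k \ γ)) := by
  rw [disjoint_left]
  rintro _ hx hx'
  obtain ⟨s, hs, rfl⟩ := mem_image.mp hx
  obtain ⟨s', -, hss'⟩ := mem_image.mp hx'
  obtain ⟨rfl, hmem⟩ := pairPick_eq_pairPick_iff.mp hss'
  simp only [mem_sdiff, hs, true_and] at hmem
  tauto

lemma le_card_filter_pairChoice {t : ℕ} (ht : t < k) (htγ : t ∉ γ) :
    t + 1 ≤ #{x ∈ pairChoice k γ | x ≤ 2 * t + 1} := by
  have hsub : (range (t + 1)).image (pairPick γ) ⊆ {x ∈ pairChoice k γ | x ≤ 2 * t + 1} := by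
    intro x hx
    obtain ⟨s, hs, rfl⟩ := mem_image.mp hx
    rw [mem_range] at hs
    refine mem_filter.mpr ⟨mem_image.mpr ⟨s, mem_range.mpr (by omega), rfl⟩, ?_⟩
    rcases Nat.lt_succ_iff_lt_or_eq.mp hs with hst | rfl
    · unfold pairPick; split_ifs <;> omega
    · rw [pairPick, if_neg htγ]
  simpa [card_image_of_injective _ (pairPick_injective γ)] using card_le_card hsub

lemma intersecting_lcDownClosure_pairChoice {n : ℕ} {Γ : Finset (Finset ℕ)}
    (hΓ : ∀ γ ∈ Γ, ∀ δ ∈ Γ, ∃ t < k, t ∉ γ ∧ t ∉ δ) :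
    Intersecting' ↑(lcDownClosure n k (Γ.image (pairChoice k))) := by
  intro F hF G hG
  obtain ⟨hFn, _, hA, hFγ⟩ := mem_lcDownClosure.mp (mem_coe.mp hF)
  obtain ⟨γ, hγ, rfl⟩ := mem_image.mp hA
  obtain ⟨hGn, _, hB, hGδ⟩ := mem_lcDownClosure.mp (mem_coe.mp hG)
  obtain ⟨δ, hδ, rfl⟩ := mem_image.mp hB
  obtain ⟨t, htk, htγ, htδ⟩ := hΓ γ hγ δ hδ
  exact inter_nonempty_of_card_filter_le (mem_powersetCard.mp hFn).1 (mem_powersetCard.mp hGn).1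
    ((le_card_filter_pairChoice htk htγ).trans (hFγ.card_filter_le _))
    ((le_card_filter_pairChoice htk htδ).trans (hGδ.card_filter_le _))

end PairChoice

section Seeds

def seedSets (k : ℕ) : Finset (Finset ℕ) :=
  ((Ioo 0 k).powersetCard (k / 2 - 1)).image (insert 0)

def orient (k : ℕ) (S : Finset (Finset ℕ)) (α : Finset ℕ) : Finset ℕ :=
  if α ∈ S then α else range k \ α

variable {k : ℕ} {α β : Finset ℕ}

lemma card_seedSets (k : ℕ) : #(seedSets k) = (k - 1).choose (k / 2 - 1) := by
  have hinj : Set.InjOn (insert 0) ((Ioo 0 k).powersetCard (k / 2 - 1) : Set (Finset ℕ)) := by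
    intro s hs s' hs' h
    have h0 : ∀ u ∈ (Ioo 0 k).powersetCard (k / 2 - 1), 0 ∉ u := fun u hu h0 => by
      simpa using (mem_powersetCard.mp hu).1 h0
    rw [← erase_insert (h0 s hs), h, erase_insert (h0 s' hs')]
  rw [seedSets, card_image_of_injOn hinj, card_powersetCard, Nat.card_Ioo, Nat.sub_zero]

lemma mem_seedSets (hk : 2 ≤ k) (hα : α ∈ seedSets k) :
    α ⊆ range k ∧ 0 ∈ α ∧ #α = k / 2 := by
  obtain ⟨s, hs, rfl⟩ := mem_image.mp hα
  obtain ⟨hsk, hcard⟩ := mem_powersetCard.mp hs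
  have h0 : 0 ∉ s := fun h => by simpa using hsk h
  refine ⟨insert_subset (mem_range.mpr (by omega)) fun x hx => ?_, mem_insert_self _ _, ?_⟩
  · exact mem_range.mpr (mem_Ioo.mp (hsk hx)).2
  · rw [card_insert_of_notMem h0, hcard]
    omega

lemma exists_notMem_notMem_of_mem_seedSets (hk : 2 ≤ k) (hα : α ∈ seedSets k)
    (hβ : β ∈ seedSets k) : ∃ t < k, t ∉ α ∧ t ∉ β := by
  obtain ⟨hαk, hα0, hαcard⟩ := mem_seedSets hk hα
  obtain ⟨hβk, hβ0, hβcard⟩ := mem_seedSets hk hβ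
  have hcard : #(α ∪ β) < #(range k) := by
    have := card_union_add_card_inter α β
    have : 1 ≤ #(α ∩ β) := card_pos.mpr ⟨0, mem_inter.mpr ⟨hα0, hβ0⟩⟩
    rw [card_range]
    omega
  obtain ⟨t, ht, htαβ⟩ := exists_mem_notMem_of_card_lt_card hcard
  exact ⟨t, mem_range.mp ht, fun h => htαβ (mem_union_left _ h),
    fun h => htαβ (mem_union_right _ h)⟩

lemma exists_notMem_mem_of_mem_seedSets (hk : 2 ≤ k) (hα : α ∈ seedSets k)
    (hβ : β ∈ seedSets k) (hαβ : α ≠ β) : ∃ t < k, t ∉ α ∧ t ∈ β := by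
  obtain ⟨-, -, hαcard⟩ := mem_seedSets hk hα
  obtain ⟨hβk, -, hβcard⟩ := mem_seedSets hk hβ
  have hβα : ¬ β ⊆ α := fun h => hαβ (eq_of_subset_of_card_le h (by omega)).symm
  obtain ⟨t, htβ, htα⟩ := not_subset.mp hβα
  exact ⟨t, mem_range.mp (hβk htβ), htα, htβ⟩

lemma exists_notMem_orient (hk : 2 ≤ k) (S : Finset (Finset ℕ)) (hα : α ∈ seedSets k)
    (hβ : β ∈ seedSets k) : ∃ t < k, t ∉ orient k S α ∧ t ∉ orient k S β := by
  have hα0 := (mem_seedSets hk hα).2.1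
  have hβ0 := (mem_seedSets hk hβ).2.1
  by_cases hαS : α ∈ S <;> by_cases hβS : β ∈ S <;>
    simp only [orient, hαS, hβS, if_true, if_false, mem_sdiff, mem_range, not_and, not_not]
  · exact exists_notMem_notMem_of_mem_seedSets hk hα hβ
  · obtain ⟨t, htk, htα, htβ⟩ :=
      exists_notMem_mem_of_mem_seedSets hk hα hβ (by rintro rfl; exact hβS hαS)
    exact ⟨t, htk, htα, fun _ => htβ⟩
  · obtain ⟨t, htk, htβ, htα⟩ :=
      exists_notMem_mem_of_mem_seedSets hk hβ hα (by rintro rfl; exact hαS hβS)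
    exact ⟨t, htk, fun _ => htα, htβ⟩
  · exact ⟨0, by omega, fun _ => hα0, fun _ => hβ0⟩

lemma choose_le_two_mul_card_seedSets (hk : 2 ≤ k) :
    (k - 1).choose (k / 2) ≤ 2 * #(seedSets k) := by
  rw [card_seedSets]
  have hpascal := Nat.choose_succ_right_eq (k - 1) (k / 2 - 1)
  rw [Nat.sub_add_cancel (by omega : 1 ≤ k / 2)] at hpascal
  have hgap : k - 1 - (k / 2 - 1) ≤ 2 * (k / 2) := by omega
  have hpos : 0 < k / 2 := by omega
  nlinarith [Nat.mul_le_mul_left ((k - 1).choose (k / 2 - 1)) hgap]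

end Seeds

noncomputable def orientedFamily (k : ℕ) (S : Finset (Finset ℕ)) : Finset (Finset ℕ) :=
  lcDownClosure (2 * k) k (((seedSets k).image (orient k S)).image (pairChoice k))

lemma two_pow_card_seedSets_le_ncard_MLCIF {k : ℕ} (hk : 2 ≤ k) :
    2 ^ #(seedSets k) ≤ {𝓕 : Finset (Finset ℕ) | MLCIF (2 * k) k 𝓕}.ncard := by
  have hint : ∀ S, Intersecting' ↑(orientedFamily k S) := fun S => by
    refine intersecting_lcDownClosure_pairChoice fun γ hγ δ hδ => ?_
    obtain ⟨α, hα, rfl⟩ := mem_image.mp hγ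
    obtain ⟨β, hβ, rfl⟩ := mem_image.mp hδ
    exact exists_notMem_orient hk S hα hβ
  choose f hf hsub using fun S =>
    exists_MLCIF_superset (leftCompressed_lcDownClosure _) (hint S)
  have hmem : ∀ S, ∀ α ∈ seedSets k, pairChoice k (orient k S α) ∈ f S := fun S α hα =>
    hsub S <| subset_lcDownClosure
      (image_subset_iff.mpr fun _ _ => pairChoice_mem_ground k _)
      (mem_image_of_mem _ (mem_image_of_mem _ hα))
  have hrecover : Set.LeftInvOn (fun 𝓕 => {α ∈ seedSets k | pairChoice k α ∈ 𝓕}) f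
      ↑(seedSets k).powerset := by
    intro S hS
    ext α
    simp only [mem_filter]
    refine ⟨fun ⟨hα, hαf⟩ => by_contra fun hαS => ?_, fun hαS => ?_⟩
    · have hcα := hmem S α hα
      rw [orient, if_neg hαS] at hcα
      exact not_disjoint_iff_nonempty_inter.mpr ((hf S).2.1 _ hαf _ hcα)
        (disjoint_pairChoice_sdiff k α)
    · have hα := mem_powerset.mp (mem_coe.mp hS) hαS
      have hcα := hmem S α hα
      rw [orient, if_pos hαS] at hcα
      exact ⟨hα, hcα⟩
  calc 2 ^ #(seedSets k) = (↑(seedSets k).powerset : Set (Finset (Finset ℕ))).ncard := by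
        rw [Set.ncard_coe_finset, card_powerset]
    _ ≤ _ := Set.ncard_le_ncard_of_injOn f (fun S _ => hf S) hrecover.injOn
        (finite_setOf_MLCIF _ _)

/-- For `k ≥ 2` there are at least `2 ^ ((1/2)·C(k-1, ⌊k/2⌋))` MLCIFs on `[2k]`. -/
theorem stmt13 (k : ℕ) (hk : 2 ≤ k) :
    (2 : ℝ) ^ ((Nat.choose (k-1) (k/2) : ℝ) / 2)
      ≤ (Set.ncard {𝓕 : Finset (Finset ℕ) | MLCIF (2*k) k 𝓕} : ℝ) := by
  have hexp : ((k - 1).choose (k / 2) : ℝ) / 2 ≤ (#(seedSets k) : ℕ) := by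
    have := choose_le_two_mul_card_seedSets hk
    rw [div_le_iff₀ two_pos]
    exact_mod_cast (by omega : (k - 1).choose (k / 2) ≤ #(seedSets k) * 2)
  calc (2 : ℝ) ^ ((k - 1).choose (k / 2) / 2 : ℝ)
      ≤ (2 : ℝ) ^ ((#(seedSets k) : ℕ) : ℝ) := Real.rpow_le_rpow_of_exponent_le one_le_two hexp
    _ = ((2 ^ #(seedSets k) : ℕ) : ℝ) := by rw [Real.rpow_natCast]; push_cast; rfl
    _ ≤ _ := by exact_mod_cast two_pow_card_seedSets_le_ncard_MLCIF hk
end
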